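/- Let a : ℝ → ℝ be continuous with sup a = ā < ∞ and a(x) → -∞ as x → ±∞, and let Q̄, τ > 0 and ψ₀ : ℝ → [0,1] be bounded. Then the function x ↦ ψ₀(x+τ) e^{∫_x^{x+τ} a(s)ds} + Q̄ ∫₀^τ e^{∫_x^{x+s} a(s')ds'} e^{(τ-s)(ā+Q̄)} ds tends to 0 as x → ±∞. -/

import Mathlib

/-!
Write `I s x = ∫_x^{x+s} a`. Since `a → -∞` at both ends, `a ≤ c` on the whole window
`[x, x + s]` once `|x|` is large, so `I s x ≤ c s`; hence `I s x → -∞` for every `s > 0`.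
The first term of `F` is a bounded factor times `exp (I τ x) → 0`. In the second, the integrand
tends to `0` for every `s ∈ (0, τ]` and, as `a ≤ ā`, is dominated by
`exp (ā s) e^{(τ - s)(ā + Q̄)}`, so dominated convergence applies.
-/

open Filter intervalIntegral MeasureTheory Set Topology Interval

theorem intervalIntegral_le_mul_of_le_on {f : ℝ → ℝ} {a b c : ℝ} (hab : a ≤ b)
    (hf : IntervalIntegrable f volume a b) (h : ∀ y ∈ Icc a b, f y ≤ c) :
    ∫ y in a..b, f y ≤ c * (b - a) := by
  simpa [mul_comm] using integral_mono_on hab hf intervalIntegrable_const h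

section WindowIntegral

variable {a : ℝ → ℝ} {s : ℝ}

theorem tendsto_intervalIntegral_add_atBot {l : Filter ℝ} (hs : 0 < s)
    (ha : ∀ x y, IntervalIntegrable a volume x y)
    (h : ∀ c, ∀ᶠ x in l, ∀ y ∈ Icc x (x + s), a y ≤ c) :
    Tendsto (fun x => ∫ y in x..x + s, a y) l atBot := by
  refine tendsto_atBot.2 fun b => ?_
  filter_upwards [h (b / s)] with x hx
  calc ∫ y in x..x + s, a y ≤ b / s * (x + s - x) :=
        intervalIntegral_le_mul_of_le_on (by linarith) (ha _ _) hx
    _ = b := by field_simp; ring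

theorem Filter.Tendsto.intervalIntegral_add_atTop (hatop : Tendsto a atTop atBot) (hs : 0 < s)
    (ha : ∀ x y, IntervalIntegrable a volume x y) :
    Tendsto (fun x => ∫ y in x..x + s, a y) atTop atBot := by
  refine tendsto_intervalIntegral_add_atBot hs ha fun c => ?_
  obtain ⟨X, hX⟩ := eventually_atTop.1 (hatop.eventually_le_atBot c)
  filter_upwards [eventually_ge_atTop X] with x hx y hy using hX y (hx.trans hy.1)

theorem Filter.Tendsto.intervalIntegral_add_atBot (habot : Tendsto a atBot atBot) (hs : 0 < s)
    (ha : ∀ x y, IntervalIntegrable a volume x y) :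
    Tendsto (fun x => ∫ y in x..x + s, a y) atBot atBot := by
  refine tendsto_intervalIntegral_add_atBot hs ha fun c => ?_
  obtain ⟨X, hX⟩ := eventually_atBot.1 (habot.eventually_le_atBot c)
  filter_upwards [eventually_le_atBot (X - s)] with x hx y hy using hX y (by linarith [hy.2])

end WindowIntegral

theorem tendsto_intervalIntegral_exp_mul_zero {a w : ℝ → ℝ} {abar τ : ℝ}
    {l : Filter ℝ} [l.IsCountablyGenerated] (ha : ∀ x y, IntervalIntegrable a volume x y)
    (habar : ∀ x, a x ≤ abar) (hw : IntervalIntegrable w volume 0 τ) (hτ : 0 ≤ τ)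
    (hlim : ∀ s, 0 < s → Tendsto (fun x => ∫ y in x..x + s, a y) l atBot) :
    Tendsto (fun x => ∫ s in (0:ℝ)..τ, Real.exp (∫ y in x..x + s, a y) * w s)
      l (𝓝 0) := by
  have hexp (x : ℝ) : Continuous fun s => Real.exp (∫ y in x..x + s, a y) :=
    ((continuous_primitive ha x).comp (continuous_const_add x)).rexp
  have hΙ : Ι 0 τ = Ioc 0 τ := uIoc_of_le hτ
  simpa using intervalIntegral.tendsto_integral_filter_of_dominated_convergence
    (μ := volume) (f := fun _ => 0) (fun s => Real.exp (abar * s) * |w s|)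
    (Eventually.of_forall fun x =>
      (hw.continuousOn_mul (hexp x).continuousOn).def'.aestronglyMeasurable)
    (Eventually.of_forall fun x => ae_of_all _ fun s hs => by
      rw [hΙ] at hs
      rw [norm_mul, Real.norm_eq_abs, Real.abs_exp, Real.norm_eq_abs]
      gcongr
      simpa [mul_comm] using intervalIntegral_le_mul_of_le_on (by linarith [hs.1]) (ha x (x + s))
        fun y _ => habar y)
    (hw.norm.continuousOn_mul (by fun_prop))
    (ae_of_all _ fun s hs => by
      rw [hΙ] at hs
      simpa using (Real.tendsto_exp_atBot.comp (hlim s hs.1)).mul_const (w s))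

theorem vanishing_at_infinity_general
    (a : ℝ → ℝ) (ha : Continuous a) (abar : ℝ) (habar : ∀ x, a x ≤ abar)
    (hatop : Tendsto a atTop atBot) (habot : Tendsto a atBot atBot)
    (Qbar τ : ℝ) (hτ : 0 < τ)
    (ψ₀ : ℝ → ℝ) (hψ₀0 : ∀ x, 0 ≤ ψ₀ x) (hψ₀1 : ∀ x, ψ₀ x ≤ 1)
    (F : ℝ → ℝ)
    (hF : ∀ x, F x = ψ₀ (x + τ) * Real.exp (∫ s in x..(x + τ), a s)
      + Qbar * ∫ s in (0:ℝ)..τ,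
          Real.exp (∫ s' in x..(x + s), a s') * Real.exp ((τ - s) * (abar + Qbar))) :
    Tendsto F atTop (nhds 0) ∧ Tendsto F atBot (nhds 0) := by
  have hai (x y : ℝ) : IntervalIntegrable a volume x y := ha.intervalIntegrable x y
  have key (l : Filter ℝ) [l.IsCountablyGenerated]
      (hlim : ∀ s, 0 < s → Tendsto (fun x => ∫ y in x..x + s, a y) l atBot) :
      Tendsto F l (𝓝 0) := by
    rw [funext hF]
    have hψ₀ : IsBoundedUnder (· ≤ ·) l fun x => ‖ψ₀ (x + τ)‖ :=
      isBoundedUnder_of ⟨1, fun x => by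
        rw [Real.norm_eq_abs, abs_of_nonneg (hψ₀0 _)]; exact hψ₀1 _⟩
    have hfirst := isBoundedUnder_le_mul_tendsto_zero hψ₀
      (Real.tendsto_exp_atBot.comp (hlim τ hτ))
    have hsecond := tendsto_intervalIntegral_exp_mul_zero hai habar
      (w := fun s => Real.exp ((τ - s) * (abar + Qbar)))
      (Continuous.intervalIntegrable (by fun_prop) _ _) hτ.le hlim
    simpa using hfirst.add (hsecond.const_mul Qbar)
  exact ⟨key _ fun s hs => hatop.intervalIntegral_add_atTop hs hai,
    key _ fun s hs => habot.intervalIntegral_add_atBot hs hai⟩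

theorem vanishing_at_infinity
    (a : ℝ → ℝ) (ha : Continuous a) (abar : ℝ) (habar : ∀ x, a x ≤ abar)
    (hatop : Tendsto a atTop atBot) (habot : Tendsto a atBot atBot)
    (Qbar τ : ℝ) (hQbar : 0 < Qbar) (hτ : 0 < τ)
    (ψ₀ : ℝ → ℝ) (hψ₀0 : ∀ x, 0 ≤ ψ₀ x) (hψ₀1 : ∀ x, ψ₀ x ≤ 1)
    (F : ℝ → ℝ)
    (hF : ∀ x, F x = ψ₀ (x + τ) * Real.exp (∫ s in x..(x + τ), a s)
      + Qbar * ∫ s in (0:ℝ)..τ,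
          Real.exp (∫ s' in x..(x + s), a s') * Real.exp ((τ - s) * (abar + Qbar))) :
    Tendsto F atTop (nhds 0) ∧ Tendsto F atBot (nhds 0) :=
  vanishing_at_infinity_general a ha abar habar hatop habot Qbar τ hτ ψ₀ hψ₀0 hψ₀1 F hF
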